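/- If δ(Δ) < 1/2, where δ(Δ) = sup_{0≠F∈𝓕₁(ℂ)} (∫_Δ |F| e^{-π|z|²/2} dA)/‖F‖_{𝓛₁}, then for any two distinct F₁, F₂ ∈ 𝓕₁(ℂ) and any function N supported on Δ with finite weighted L¹ norm, ‖(F₁ + N) - F₂‖ > ‖N‖; equivalently, F₁ is the strict unique minimizer of g ↦ ‖(F₁ + N) - g‖ over 𝓕₁(ℂ). -/

import Mathlib

/-!
Write `D = F₁ - F₂`, a nonzero element of `𝓕₁(ℂ)`. Off `Δ` the perturbation `N` vanishes, so there
`|D + N| = |D|`; on `Δ` the triangle inequality gives `|D + N| ≥ |N| - |D|`. Integrating,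
`‖D + N‖ ≥ ‖N‖ + ‖χ_{Δᶜ} D‖ - ‖χ_Δ D‖`, and `δ(Δ) < 1/2` forces `D` to carry less than half of
its (positive) weighted mass on `Δ`, i.e. `‖χ_Δ D‖ < ‖χ_{Δᶜ} D‖`.
-/

open MeasureTheory

/-- Gaussian-weighted L¹ (Fock) norm. -/
noncomputable def fockNorm (F : ℂ → ℂ) : ℝ :=
  ∫ z : ℂ, ‖F z‖ * Real.exp (-Real.pi * ‖z‖ ^ 2 / 2)

/-- Membership in the Fock space `𝓕₁(ℂ)`. -/
def MemFock1 (F : ℂ → ℂ) : Prop :=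
  Differentiable ℂ F ∧
    Integrable (fun z : ℂ => ‖F z‖ * Real.exp (-Real.pi * ‖z‖ ^ 2 / 2))

/-- `δ(Δ) = sup_{0 ≠ F ∈ 𝓕₁} (∫_Δ |F| e^{-π|z|²/2} dA)/‖F‖_{𝓛₁}`. -/
noncomputable def fockDelta (Δ : Set ℂ) : ℝ :=
  ⨆ F : {F : ℂ → ℂ // MemFock1 F ∧ F ≠ 0},
    (∫ z in Δ, ‖F.1 z‖ * Real.exp (-Real.pi * ‖z‖ ^ 2 / 2)) / fockNorm F.1

section LoganL1

variable {α E : Type*} [MeasurableSpace α] [NormedAddCommGroup E] {μ : Measure α} {s : Set α}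

theorem integral_norm_lt_integral_norm_add (hs : MeasurableSet s) {f g : α → E}
    (hf : Integrable f μ) (hg : Integrable g μ) (hg_supp : ∀ᵐ x ∂μ, x ∉ s → g x = 0)
    (hconc : ∫ x in s, ‖f x‖ ∂μ < ∫ x in sᶜ, ‖f x‖ ∂μ) :
    ∫ x, ‖g x‖ ∂μ < ∫ x, ‖f x + g x‖ ∂μ := by
  have hg_compl : ∫ x in sᶜ, ‖g x‖ ∂μ = 0 :=
    setIntegral_eq_zero_of_ae_eq_zero (by
      filter_upwards [hg_supp] with x hx hxs
      simp [hx hxs])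
  have hfg_compl : ∫ x in sᶜ, ‖f x + g x‖ ∂μ = ∫ x in sᶜ, ‖f x‖ ∂μ :=
    setIntegral_congr_ae hs.compl (by
      filter_upwards [hg_supp] with x hx hxs
      simp [hx hxs])
  have hfg_s : ∫ x in s, ‖g x‖ ∂μ - ∫ x in s, ‖f x‖ ∂μ ≤ ∫ x in s, ‖f x + g x‖ ∂μ := by
    rw [← integral_sub hg.norm.integrableOn hf.norm.integrableOn]
    refine integral_mono (hg.norm.sub hf.norm).integrableOn (hf.add hg).norm.integrableOn
      fun x => ?_
    simpa [sub_le_iff_le_add, add_comm] using norm_le_norm_add_norm_sub' (g x) (f x + g x)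
  calc ∫ x, ‖g x‖ ∂μ = ∫ x in s, ‖g x‖ ∂μ := by
        rw [← integral_add_compl hs hg.norm, hg_compl, add_zero]
    _ < (∫ x in s, ‖g x‖ ∂μ - ∫ x in s, ‖f x‖ ∂μ) + ∫ x in sᶜ, ‖f x‖ ∂μ := by linarith
    _ ≤ ∫ x in s, ‖f x + g x‖ ∂μ + ∫ x in sᶜ, ‖f x + g x‖ ∂μ := by rw [hfg_compl]; gcongr
    _ = ∫ x, ‖f x + g x‖ ∂μ := integral_add_compl hs (hf.add hg).norm

end LoganL1

noncomputable def gaussWeight (z : ℂ) : ℝ := Real.exp (-Real.pi * ‖z‖ ^ 2 / 2)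

theorem gaussWeight_pos (z : ℂ) : 0 < gaussWeight z := Real.exp_pos _

theorem continuous_gaussWeight : Continuous gaussWeight := by
  unfold gaussWeight
  fun_prop

theorem norm_mul_gaussWeight_nonneg (F : ℂ → ℂ) (z : ℂ) : 0 ≤ ‖F z‖ * gaussWeight z :=
  mul_nonneg (norm_nonneg _) (gaussWeight_pos z).le

theorem norm_gaussWeight_smul (F : ℂ → ℂ) (z : ℂ) :
    ‖gaussWeight z • F z‖ = ‖F z‖ * gaussWeight z := by
  rw [norm_smul, Real.norm_of_nonneg (gaussWeight_pos z).le, mul_comm]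

theorem fockNorm_eq_integral_norm_gaussWeight_smul (F : ℂ → ℂ) :
    fockNorm F = ∫ z, ‖gaussWeight z • F z‖ := by
  simp only [norm_gaussWeight_smul]
  rfl

theorem integrable_gaussWeight_smul_iff {F : ℂ → ℂ} (hF : AEStronglyMeasurable F) :
    Integrable (fun z => gaussWeight z • F z) ↔
      Integrable (fun z => ‖F z‖ * gaussWeight z) := by
  rw [← integrable_norm_iff (f := fun z => gaussWeight z • F z)
    (continuous_gaussWeight.aestronglyMeasurable.smul hF)]
  simp only [norm_gaussWeight_smul]

namespace MemFock1

variable {F G : ℂ → ℂ}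

theorem integrable_gaussWeight_smul (hF : MemFock1 F) :
    Integrable (fun z => gaussWeight z • F z) :=
  (integrable_gaussWeight_smul_iff hF.1.continuous.aestronglyMeasurable).2 hF.2

theorem sub (hF : MemFock1 F) (hG : MemFock1 G) : MemFock1 (F - G) := by
  refine ⟨hF.1.sub hG.1, (integrable_gaussWeight_smul_iff
    (hF.1.sub hG.1).continuous.aestronglyMeasurable).1 ?_⟩
  convert hF.integrable_gaussWeight_smul.sub hG.integrable_gaussWeight_smul using 1
  ext z
  simp [smul_sub]

theorem fockNorm_pos (hF : MemFock1 F) (hne : F ≠ 0) : 0 < fockNorm F := by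
  have hcont : Continuous fun z => ‖F z‖ * gaussWeight z :=
    (continuous_norm.comp hF.1.continuous).mul continuous_gaussWeight
  have hsupp : (Function.support fun z => ‖F z‖ * gaussWeight z).Nonempty := by
    obtain ⟨z, hz⟩ := Function.ne_iff.1 hne
    exact ⟨z, mul_ne_zero (norm_ne_zero_iff.2 hz) (gaussWeight_pos z).ne'⟩
  exact (integral_pos_iff_support_of_nonneg (norm_mul_gaussWeight_nonneg F) hF.2).2
    (hcont.isOpen_support.measure_pos volume hsupp)

theorem setIntegral_le_fockDelta_mul (Δ : Set ℂ) (hF : MemFock1 F) (hne : F ≠ 0) :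
    ∫ z in Δ, ‖F z‖ * gaussWeight z ≤ fockDelta Δ * fockNorm F := by
  have hbdd : BddAbove (Set.range fun G : {G : ℂ → ℂ // MemFock1 G ∧ G ≠ 0} =>
      (∫ z in Δ, ‖G.1 z‖ * gaussWeight z) / fockNorm G.1) := by
    refine ⟨1, ?_⟩
    rintro _ ⟨⟨G, hG, -⟩, rfl⟩
    exact div_le_one_of_le₀
      (setIntegral_le_integral hG.2 (.of_forall (norm_mul_gaussWeight_nonneg G)))
      (integral_nonneg (norm_mul_gaussWeight_nonneg G))
  rw [← div_le_iff₀ (hF.fockNorm_pos hne)]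
  exact le_ciSup hbdd ⟨F, hF, hne⟩

theorem setIntegral_lt_setIntegral_compl {Δ : Set ℂ} (hΔ : MeasurableSet Δ)
    (hδ : fockDelta Δ < 1 / 2) (hF : MemFock1 F) (hne : F ≠ 0) :
    ∫ z in Δ, ‖F z‖ * gaussWeight z < ∫ z in Δᶜ, ‖F z‖ * gaussWeight z := by
  have hsplit : (∫ z in Δ, ‖F z‖ * gaussWeight z) + ∫ z in Δᶜ, ‖F z‖ * gaussWeight z =
      fockNorm F :=
    integral_add_compl hΔ hF.2
  have hlt : fockDelta Δ * fockNorm F < 1 / 2 * fockNorm F := by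
    gcongr
    exact hF.fockNorm_pos hne
  linarith [hF.setIntegral_le_fockDelta_mul Δ hne]

end MemFock1

/-- Logan's phenomenon: if `δ(Δ) < 1/2`, `F₁ ≠ F₂` in `𝓕₁(ℂ)` and `N` is supported
on `Δ` with finite weighted L¹ norm, then `‖(F₁ + N) - F₂‖ > ‖N‖`. -/
theorem logan_phenomenon (Δ : Set ℂ) (hΔ : MeasurableSet Δ) (hδ : fockDelta Δ < 1 / 2)
    (F₁ F₂ : ℂ → ℂ) (hF₁ : MemFock1 F₁) (hF₂ : MemFock1 F₂) (hne : F₁ ≠ F₂)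
    (N : ℂ → ℂ) (hNmeas : Measurable N)
    (hN1 : Integrable (fun z : ℂ => ‖N z‖ * Real.exp (-Real.pi * ‖z‖ ^ 2 / 2)))
    (hNsupp : ∀ᵐ z : ℂ, z ∉ Δ → N z = 0) :
    fockNorm N < fockNorm (fun z => F₁ z + N z - F₂ z) := by
  have hD : MemFock1 (F₁ - F₂) := hF₁.sub hF₂
  have hN : Integrable (fun z => gaussWeight z • N z) :=
    (integrable_gaussWeight_smul_iff hNmeas.aestronglyMeasurable).2 hN1
  have hconc := hD.setIntegral_lt_setIntegral_compl hΔ hδ (sub_ne_zero.2 hne)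
  simp only [← norm_gaussWeight_smul] at hconc
  have key := integral_norm_lt_integral_norm_add hΔ hD.integrable_gaussWeight_smul hN
    (by filter_upwards [hNsupp] with z hz hzΔ; simp [hz hzΔ]) hconc
  calc fockNorm N = ∫ z, ‖gaussWeight z • N z‖ := fockNorm_eq_integral_norm_gaussWeight_smul N
    _ < ∫ z, ‖gaussWeight z • (F₁ - F₂) z + gaussWeight z • N z‖ := key
    _ = fockNorm (fun z => F₁ z + N z - F₂ z) := by
      rw [fockNorm_eq_integral_norm_gaussWeight_smul]
      congr 1 with z
      rw [← smul_add, Pi.sub_apply, sub_add_eq_add_sub]
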